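/- The functions C1 = (γ, γ) and C2 = (γ, M) are Casimir functions of the Poisson bracket {·,·}_g: they Poisson-commute with all coordinate functions γ_i and M_i. -/

import Mathlib

open scoped BigOperators
noncomputable section

/-- ℝ³ as functions `Fin 3 → ℝ`. -/
abbrev R3 := Fin 3 → ℝ

/-- Phase space: pairs `(γ, M)`. -/
abbrev St := R3 × R3

/-- Standard scalar product in ℝ³. -/
def dot3 (x y : R3) : ℝ := ∑ i, x i * y i

/-- Cross product in ℝ³. -/
def cross (x y : R3) : R3 :=
  ![x 1 * y 2 - x 2 * y 1, x 2 * y 0 - x 0 * y 2, x 0 * y 1 - x 1 * y 0]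

/-- Levi-Civita symbol. -/
def eps (i j k : Fin 3) : ℝ :=
  ((((j : ℤ) - (i : ℤ)) * ((k : ℤ) - (i : ℤ)) * ((k : ℤ) - (j : ℤ))) / 2 : ℤ)

/-- Application of the diagonal matrix A = diag a. -/
def Aapp (a : R3) (v : R3) : R3 := fun i => a i * v i

/-- Angular velocity ω expressed through M. -/
def omg (a : R3) (d : ℝ) (x : St) : R3 := fun i =>
  a i * x.2 i + d * dot3 x.1 (Aapp a x.2) / (1 - d * dot3 x.1 (Aapp a x.1)) * (a i * x.1 i)

/-- g(γ) = sqrt(1 - d (γ, Aγ)). -/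
def gfun (a : R3) (d : ℝ) (γ : R3) : ℝ := Real.sqrt (1 - d * dot3 γ (Aapp a γ))

/-- Partial derivative in the γ (inl) or M (inr) direction. -/
def pd : (Fin 3 ⊕ Fin 3) → (St → ℝ) → St → ℝ
  | .inl i, F, x => fderiv ℝ F x (Pi.single i 1, 0)
  | .inr i, F, x => fderiv ℝ F x (0, Pi.single i 1)

/-- Bracket of two functions determined by a structure matrix π. -/
def pb (π : St → (Fin 3 ⊕ Fin 3) → (Fin 3 ⊕ Fin 3) → ℝ) (F G : St → ℝ) (x : St) : ℝ :=
  ∑ u, ∑ v, π x u v * pd u F x * pd v G x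

/-- Structure matrix of the bracket {·,·}_g. -/
def piG (a : R3) (d : ℝ) (x : St) : (Fin 3 ⊕ Fin 3) → (Fin 3 ⊕ Fin 3) → ℝ
  | .inl _, .inl _ => 0
  | .inl i, .inr j => ∑ k, eps i j k * gfun a d x.1 * x.1 k
  | .inr i, .inl j => ∑ k, eps i j k * gfun a d x.1 * x.1 k
  | .inr i, .inr j => ∑ k, eps i j k *
      (gfun a d x.1 * x.2 k - d * dot3 x.2 (Aapp a x.1) * x.1 k / gfun a d x.1)

/-- Coordinate functions on the phase space. -/
def coordFn : (Fin 3 ⊕ Fin 3) → St → ℝ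
  | .inl i => fun x => x.1 i
  | .inr i => fun x => x.2 i

/-! Contracting the Levi-Civita symbol against two vectors gives their cross product, so the
bracket of any `F` with `γ_j` is the `j`-th component of `(g γ) × ∂F/∂M`, and with `M_j` that of
`(g γ) × ∂F/∂γ + (g M - (d (M, Aγ) / g) γ) × ∂F/∂M`. The gradients `(∂/∂γ, ∂/∂M)` of `C1` and
`C2` are `(2γ, 0)` and `(M, γ)`, so every bracket reduces to `γ × γ = 0` or
`γ × M + M × γ = 0`. -/

open Matrix

def coordCLM : Fin 3 ⊕ Fin 3 → St →L[ℝ] ℝ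
  | .inl i => (ContinuousLinearMap.proj i).comp (ContinuousLinearMap.fst ℝ R3 R3)
  | .inr i => (ContinuousLinearMap.proj i).comp (ContinuousLinearMap.snd ℝ R3 R3)

lemma coe_coordCLM (v : Fin 3 ⊕ Fin 3) : ⇑(coordCLM v) = coordFn v := by
  cases v <;> rfl

lemma differentiable_coordFn (v : Fin 3 ⊕ Fin 3) : Differentiable ℝ (coordFn v) :=
  coe_coordCLM v ▸ (coordCLM v).differentiable

lemma pd_coordFn (u v : Fin 3 ⊕ Fin 3) (x : St) :
    pd u (coordFn v) x = if u = v then 1 else 0 := by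
  rw [← coe_coordCLM]
  rcases u with i | i <;> rcases v with j | j <;>
    simp [pd, coordCLM, ContinuousLinearMap.fderiv, Pi.single_apply, eq_comm]

lemma pd_mul {F G : St → ℝ} {x : St} (hF : DifferentiableAt ℝ F x)
    (hG : DifferentiableAt ℝ G x) (u : Fin 3 ⊕ Fin 3) :
    pd u (fun y => F y * G y) x = pd u F x * G x + F x * pd u G x := by
  cases u <;> simp [pd, fderiv_fun_mul hF hG] <;> ring

lemma pd_sum {ι : Type*} (s : Finset ι) {F : ι → St → ℝ} {x : St}
    (hF : ∀ i ∈ s, DifferentiableAt ℝ (F i) x) (u : Fin 3 ⊕ Fin 3) :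
    pd u (fun y => ∑ i ∈ s, F i y) x = ∑ i ∈ s, pd u (F i) x := by
  cases u <;> simp [pd, fderiv_fun_sum hF]

lemma pd_sum_coordFn_mul (p q : Fin 3 → Fin 3 ⊕ Fin 3) (u : Fin 3 ⊕ Fin 3) (x : St) :
    pd u (fun y => ∑ i, coordFn (p i) y * coordFn (q i) y) x =
      ∑ i, ((if u = p i then 1 else 0) * coordFn (q i) x +
        coordFn (p i) x * if u = q i then 1 else 0) := by
  rw [pd_sum _ fun i _ => (differentiable_coordFn _ x).fun_mul (differentiable_coordFn _ x)]
  simp only [pd_mul (differentiable_coordFn _ x) (differentiable_coordFn _ x), pd_coordFn]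

def gradFst (F : St → ℝ) (x : St) : R3 := fun i => pd (.inl i) F x

def gradSnd (F : St → ℝ) (x : St) : R3 := fun i => pd (.inr i) F x

lemma dot3_fst_fst_eq (y : St) : dot3 y.1 y.1 = ∑ j, coordFn (.inl j) y * coordFn (.inl j) y :=
  rfl

lemma dot3_fst_snd_eq (y : St) : dot3 y.1 y.2 = ∑ j, coordFn (.inl j) y * coordFn (.inr j) y :=
  rfl

lemma gradFst_dot3_fst_fst (x : St) : gradFst (fun y => dot3 y.1 y.1) x = (2 : ℝ) • x.1 := by
  ext i
  simp only [gradFst, dot3_fst_fst_eq, pd_sum_coordFn_mul]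
  simp [coordFn, Finset.sum_add_distrib, two_mul]

lemma gradSnd_dot3_fst_fst (x : St) : gradSnd (fun y => dot3 y.1 y.1) x = 0 := by
  ext i
  simp [gradSnd, dot3_fst_fst_eq, pd_sum_coordFn_mul]

lemma gradFst_dot3_fst_snd (x : St) : gradFst (fun y => dot3 y.1 y.2) x = x.2 := by
  ext i
  simp only [gradFst, dot3_fst_snd_eq, pd_sum_coordFn_mul]
  simp [coordFn]

lemma gradSnd_dot3_fst_snd (x : St) : gradSnd (fun y => dot3 y.1 y.2) x = x.1 := by
  ext i
  simp only [gradSnd, dot3_fst_snd_eq, pd_sum_coordFn_mul]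
  simp [coordFn]

lemma pb_coordFn (π : St → (Fin 3 ⊕ Fin 3) → (Fin 3 ⊕ Fin 3) → ℝ) (F : St → ℝ)
    (w : Fin 3 ⊕ Fin 3) (x : St) : pb π F (coordFn w) x = ∑ u, π x u w * pd u F x := by
  simp [pb, pd_coordFn]

lemma sum_eps_mul_mul_eq_cross (v w : R3) (j : Fin 3) :
    ∑ i, (∑ k, eps i j k * v k) * w i = (v ⨯₃ w) j := by
  fin_cases j <;> simp [Fin.sum_univ_three, eps, cross_apply] <;> ring

lemma pb_piG_coordFn_inl (a : R3) (d : ℝ) (F : St → ℝ) (x : St) (j : Fin 3) :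
    pb (piG a d) F (coordFn (.inl j)) x = ((gfun a d x.1 • x.1) ⨯₃ gradSnd F x) j := by
  rw [pb_coordFn, Fintype.sum_sum_type, ← sum_eps_mul_mul_eq_cross]
  simp [piG, gradSnd, mul_assoc]

lemma pb_piG_coordFn_inr (a : R3) (d : ℝ) (F : St → ℝ) (x : St) (j : Fin 3) :
    pb (piG a d) F (coordFn (.inr j)) x =
      ((gfun a d x.1 • x.1) ⨯₃ gradFst F x +
        (gfun a d x.1 • x.2 - (d * dot3 x.2 (Aapp a x.1) / gfun a d x.1) • x.1) ⨯₃
          gradSnd F x) j := by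
  rw [pb_coordFn, Fintype.sum_sum_type, Pi.add_apply, ← sum_eps_mul_mul_eq_cross, ← sum_eps_mul_mul_eq_cross]
  simp [piG, gradFst, gradSnd, mul_assoc, div_mul_eq_mul_div]

theorem casimirs_g_bracket_general
    (a : R3) (d : ℝ)
    (x : St) :
    ∀ u : Fin 3 ⊕ Fin 3,
      pb (piG a d) (fun y => dot3 y.1 y.1) (coordFn u) x = 0 ∧
      pb (piG a d) (fun y => dot3 y.1 y.2) (coordFn u) x = 0 := by
  rintro (j | j)
  · simp [pb_piG_coordFn_inl, gradSnd_dot3_fst_fst, gradSnd_dot3_fst_snd, cross_self]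
  · refine ⟨?_, ?_⟩
    · simp [pb_piG_coordFn_inr, gradFst_dot3_fst_fst, gradSnd_dot3_fst_fst, cross_self]
    · rw [pb_piG_coordFn_inr, gradFst_dot3_fst_snd, gradSnd_dot3_fst_snd]
      simp only [map_smul, map_sub, LinearMap.smul_apply, LinearMap.sub_apply, cross_self,
        smul_zero, sub_zero, ← smul_add, cross_anticomm', Pi.zero_apply]

/-- C1 = (γ,γ) and C2 = (γ,M) are Casimir functions of {·,·}_g:
they Poisson commute with every coordinate function γ_i, M_i. -/
theorem casimirs_g_bracket
    (a : R3) (d : ℝ) (hd : 0 < d)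
    (x : St) (hx : 0 < 1 - d * dot3 x.1 (Aapp a x.1)) :
    ∀ u : Fin 3 ⊕ Fin 3,
      pb (piG a d) (fun y => dot3 y.1 y.1) (coordFn u) x = 0 ∧
      pb (piG a d) (fun y => dot3 y.1 y.2) (coordFn u) x = 0 :=
  casimirs_g_bracket_general a d x
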